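/- arXiv:1405.3390 — 2 statements merged into one kernel-verified Lean document; each statement's English description precedes it below -/
import Mathlib

section
/- If x ∈ 𝒬'_g(n+2) (i.e. x is either a connected 2-backbone shape of genus g with n+2 arcs, or an ordered pair of 1-backbone shapes with positive genera summing to g+1 and arc numbers summing to n+2, placed on two backbones) has exactly ℓ multiloops, then its image η(x) under the gluing map is an A-shape over one backbone in 𝒜_{g+1}(n+3) having exactly ℓ+1 multiloops; here a multiloop is a boundary component of length at least 3, i.e. a cycle of α∘γ of length ≥ 3. -/
/-!
Gluing turns the two old rainbows into ordinary arcs and adds a new one. On boundary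
permutations, the two fixed points of `α ∘ γ` produced by the old rainbows disappear, the new
rainbow gives a fixed point, and the vertices `0`, `m`, `2n` of the glued backbone form a new
3-cycle; every other boundary cycle is carried over, shifted by one. So the number of boundary
components is unchanged, which raises the genus by one because there is one more arc, and the
number of multiloops grows by exactly one. The result is an A-shape because the partner of
vertex `1` is the end of the first old rainbow and the next vertex starts the second one. No
1-arc or stack is created as long as each backbone has at least three vertices, which holds for
a connected shape and for a pair of shapes of positive genus. A pair of 1-backbone shapes
placed on two backbones has the boundary components of both factors, hence is a 2-backbone
shape of genus `g₁ + g₂ - 1`.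
-/

namespace RNA

noncomputable section

/-- The forward orbit of `x` under iteration of `f`. -/
def orbitOf (f : ℕ → ℕ) (x : ℕ) : Set ℕ := {y | ∃ j : ℕ, f^[j] x = y}

/-- The number of cycles (orbits) of `f` among the points `< k`. -/
def numCyclesOn (f : ℕ → ℕ) (k : ℕ) : ℕ :=
  Set.ncard {S : Set ℕ | ∃ x, x < k ∧ S = orbitOf f x}

/-- The number of cycles of length at least `3` among the points `< k` (multiloops). -/
def numMultiOn (f : ℕ → ℕ) (k : ℕ) : ℕ :=
  Set.ncard {S : Set ℕ | (∃ x, x < k ∧ S = orbitOf f x) ∧ 3 ≤ S.ncard}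

/-- The cyclic permutation `(0 1 ⋯ k-1)`, as a function on `ℕ` fixing everything `≥ k`. -/
def gammaOne (k : ℕ) : ℕ → ℕ := fun i => if i + 1 = k then 0 else if i < k then i + 1 else i

/-- The permutation with the two cycles `(0 ⋯ m-1)` and `(m ⋯ k-1)`. -/
def gammaTwo (m k : ℕ) : ℕ → ℕ := fun i =>
  if i + 1 = m then 0 else if i + 1 = k then m else if i < k then i + 1 else i

/-- A planted 1-backbone diagram with `n` arcs: an involution on the vertices
`0, 1, …, 2n-1` (shifting the paper's labels `1, …, 2n` by one). -/
structure OneD where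
  n : ℕ
  f : ℕ → ℕ

namespace OneD

/-- Well-formedness: `n ≥ 1`, `f` is a fixed-point-free involution of `{0, …, 2n-1}`
(extended by the identity elsewhere) pairing `0` with `2n-1` (the rainbow). -/
def WF (D : OneD) : Prop :=
  1 ≤ D.n ∧ (∀ i, i < 2 * D.n → D.f i < 2 * D.n) ∧
    (∀ i, 2 * D.n ≤ i → D.f i = i) ∧ (∀ i, D.f (D.f i) = i) ∧
    (∀ i, i < 2 * D.n → D.f i ≠ i) ∧ D.f 0 = 2 * D.n - 1

/-- `{i,j}` is an arc. -/
def arc (D : OneD) (i j : ℕ) : Prop := i < 2 * D.n ∧ D.f i = j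

/-- A shape: no 1-arc other than possibly the rainbow, and no stack
(no pair of arcs `{i,j}`, `{i+1,j-1}` with `i+1 < j-1`). -/
def IsShape (D : OneD) : Prop :=
  (∀ i, D.arc i (i + 1) → i = 0 ∧ i + 1 = 2 * D.n - 1) ∧
  (∀ i j, D.arc i j → D.arc (i + 1) (j - 1) → ¬ (i + 1 < j - 1))

/-- The boundary permutation `α ∘ γ`. -/
def bd (D : OneD) : ℕ → ℕ := D.f ∘ gammaOne (2 * D.n)

/-- The number `r` of boundary components. -/
def r (D : OneD) : ℕ := numCyclesOn D.bd (2 * D.n)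

/-- The number of multiloops: boundary components of length at least 3. -/
def nMulti (D : OneD) : ℕ := numMultiOn D.bd (2 * D.n)

/-- The genus `g`, defined by `2 - 2g - r = 1 - n`. -/
def HasGenus (D : OneD) (g : ℕ) : Prop := 2 * g + D.r = D.n + 1

/-- A-shape: the vertex following the partner of vertex `1` (paper's vertex `2`)
is paired with vertex `2n-2` (paper's vertex `2n-1`); only for `n ≥ 2`. -/
def IsA (D : OneD) : Prop := 2 ≤ D.n ∧ D.f (D.f 1 + 1) = 2 * D.n - 2

/-- B-shape: a shape with `n ≥ 2` arcs which is not an A-shape. -/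
def IsB (D : OneD) : Prop := 2 ≤ D.n ∧ D.f (D.f 1 + 1) ≠ 2 * D.n - 2

end OneD

/-- The set of 1-backbone shapes of genus `g`. -/
def oneShapeSet (g : ℕ) : Set OneD := {D | D.WF ∧ D.IsShape ∧ D.HasGenus g}

/-- The set of 1-backbone shapes of genus `g` with `n` arcs. -/
def oneShapeSetN (g n : ℕ) : Set OneD := {D | D ∈ oneShapeSet g ∧ D.n = n}

/-- The set of A-shapes of genus `g`. -/
def ASet (g : ℕ) : Set OneD := {D | D ∈ oneShapeSet g ∧ D.IsA}

/-- The set `𝒜_g(n)` of A-shapes of genus `g` with `n` arcs. -/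
def ASetN (g n : ℕ) : Set OneD := {D | D ∈ oneShapeSetN g n ∧ D.IsA}

/-- The set `ℬ_g(n)` of B-shapes of genus `g` with `n` arcs. -/
def BSetN (g n : ℕ) : Set OneD := {D | D ∈ oneShapeSetN g n ∧ D.IsB}

/-- `s_g(n)`: the number of 1-backbone shapes of genus `g` with `n` arcs. -/
def sCount (g n : ℕ) : ℕ := (oneShapeSetN g n).ncard

/-- `a_g(n)`: the number of A-shapes of genus `g` with `n` arcs. -/
def aCount (g n : ℕ) : ℕ := (ASetN g n).ncard

/-- A 2-backbone diagram with `n` arcs and cut point `m`: an involution on the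
vertices `0, …, 2n-1`, with backbones `{0, …, m-1}` and `{m, …, 2n-1}`. -/
structure TwoD where
  n : ℕ
  m : ℕ
  f : ℕ → ℕ

namespace TwoD

/-- Well-formedness of a 2-backbone matching: two nonempty backbones and `f` a
fixed-point-free involution of `{0, …, 2n-1}` (extended by the identity). -/
def WF (D : TwoD) : Prop :=
  1 ≤ D.m ∧ D.m < 2 * D.n ∧ (∀ i, i < 2 * D.n → D.f i < 2 * D.n) ∧
    (∀ i, 2 * D.n ≤ i → D.f i = i) ∧ (∀ i, D.f (D.f i) = i) ∧
    (∀ i, i < 2 * D.n → D.f i ≠ i)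

/-- `{i,j}` is an arc. -/
def arc (D : TwoD) (i j : ℕ) : Prop := i < 2 * D.n ∧ D.f i = j

/-- `i` and `j` lie in the same backbone. -/
def sameBB (D : TwoD) (i j : ℕ) : Prop := (i < D.m ∧ j < D.m) ∨ (D.m ≤ i ∧ D.m ≤ j)

/-- Connectivity: some arc has one endpoint in each backbone. -/
def Connected (D : TwoD) : Prop := ∃ i j, D.arc i j ∧ i < D.m ∧ D.m ≤ j

/-- A 2-backbone shape: both rainbows `{0, m-1}` and `{m, 2n-1}` are present,
there is no 1-arc (an arc `{i,i+1}` within one backbone) other than possibly the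
rainbows, and no stack. -/
def IsShape (D : TwoD) : Prop :=
  2 ≤ D.m ∧ D.m + 2 ≤ 2 * D.n ∧ D.f 0 = D.m - 1 ∧ D.f D.m = 2 * D.n - 1 ∧
  (∀ i, D.arc i (i + 1) → D.sameBB i (i + 1) →
      (i = 0 ∧ i + 1 = D.m - 1) ∨ (i = D.m ∧ i + 1 = 2 * D.n - 1)) ∧
  (∀ i j, D.arc i j → D.arc (i + 1) (j - 1) → D.sameBB i (i + 1) →
      D.sameBB (j - 1) j → ¬ (i + 1 < j - 1))

/-- The boundary permutation `α ∘ γ`. -/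
def bd (D : TwoD) : ℕ → ℕ := D.f ∘ gammaTwo D.m (2 * D.n)

/-- The number `r` of boundary components. -/
def r (D : TwoD) : ℕ := numCyclesOn D.bd (2 * D.n)

/-- The number of multiloops: boundary components of length at least 3. -/
def nMulti (D : TwoD) : ℕ := numMultiOn D.bd (2 * D.n)

/-- The genus `g`, defined by `2 - 2g - r = 2 - n`. -/
def HasGenus (D : TwoD) (g : ℕ) : Prop := 2 * g + D.r = D.n

end TwoD

/-- The set `𝒬_g(n)` of connected 2-backbone shapes of genus `g` with `n` arcs. -/
def twoShapeSetN (g n : ℕ) : Set TwoD :=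
  {D | D.WF ∧ D.IsShape ∧ D.Connected ∧ D.HasGenus g ∧ D.n = n}

/-- `q_g(n)`: the number of connected 2-backbone shapes of genus `g` with `n` arcs. -/
def qCount (g n : ℕ) : ℕ := (twoShapeSetN g n).ncard

/-- The gluing map `η`: concatenate the two backbones (the two old rainbows become
ordinary arcs) and add a new rainbow over the resulting single backbone. -/
def glue (D : TwoD) : OneD :=
  ⟨D.n + 1, fun i =>
    if i = 0 then 2 * D.n + 1
    else if i = 2 * D.n + 1 then 0
    else if i ≤ 2 * D.n then D.f (i - 1) + 1
    else i⟩

/-- Place an ordered pair of 1-backbone diagrams on two backbones,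
each keeping its own rainbow. -/
def combine (S T : OneD) : TwoD :=
  ⟨S.n + T.n, 2 * S.n, fun i =>
    if i < 2 * S.n then S.f i
    else if i < 2 * (S.n + T.n) then T.f (i - 2 * S.n) + 2 * S.n
    else i⟩

/-- The set `𝒬'_g(N)`: the disjoint union of the set of connected 2-backbone shapes
of genus `g` with `N` arcs and the set of ordered pairs of 1-backbone shapes whose
genera are positive and sum to `g+1` and whose arc numbers sum to `N`. -/
def QprimeSetN (g N : ℕ) : Set (TwoD ⊕ OneD × OneD) :=
  {x | Sum.elim
        (fun D : TwoD => D.WF ∧ D.IsShape ∧ D.Connected ∧ D.HasGenus g ∧ D.n = N)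
        (fun p : OneD × OneD =>
          p.1.WF ∧ p.1.IsShape ∧ p.2.WF ∧ p.2.IsShape ∧
          (∃ g₁ g₂, 1 ≤ g₁ ∧ 1 ≤ g₂ ∧ g₁ + g₂ = g + 1 ∧
            p.1.HasGenus g₁ ∧ p.2.HasGenus g₂) ∧
          p.1.n + p.2.n = N) x}

/-- The gluing map `η` on `𝒬'`: glue a connected 2-backbone shape directly, and glue
a pair of 1-backbone shapes after placing them on two backbones. -/
def etaMap : TwoD ⊕ OneD × OneD → OneD := Sum.elim glue fun p => glue (combine p.1 p.2)

/-- The 2-backbone diagram underlying an element of `𝒬'`. -/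
def underlyingTwoD : TwoD ⊕ OneD × OneD → TwoD := Sum.elim id fun p => combine p.1 p.2

/-- Old label of the new vertex `k` after deleting the two points `a < b`. -/
def insTwo (a b k : ℕ) : ℕ := if k < a then k else if k + 1 < b then k + 1 else k + 2

/-- New label of the old vertex `j` after deleting the two points `a < b`. -/
def delTwo (a b j : ℕ) : ℕ := j - (if a < j then 1 else 0) - (if b < j then 1 else 0)

/-- The involution obtained from `f` by deleting the two paired points `a < b`
and relabeling. -/
def deleteTwo (f : ℕ → ℕ) (a b : ℕ) : ℕ → ℕ := fun k => delTwo a b (f (insTwo a b k))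

/-- The map `θ`: remove from an A-shape the arc joining the vertex following the
partner of vertex `1` (paper's vertex `2`) to the vertex `2n-2` (paper's `2n-1`),
deleting its two endpoints and relabeling. -/
def theta (D : OneD) : OneD := ⟨D.n - 1, deleteTwo D.f (D.f 1 + 1) (2 * D.n - 2)⟩

/-- The new cut point after deleting the points `a` and `b`. -/
def mshift (m a b : ℕ) : ℕ := m - (if a < m then 1 else 0) - (if b < m then 1 else 0)

/-- One reduction step: delete a 1-arc (an arc `{i,i+1}` within one backbone), or
collapse a stack `{i,j}`, `{i+1,j-1}` by deleting the inner arc `{i+1,j-1}`. -/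
def Step (M M' : TwoD) : Prop :=
  (∃ i, M.arc i (i + 1) ∧ M.sameBB i (i + 1) ∧
      M' = ⟨M.n - 1, mshift M.m i (i + 1), deleteTwo M.f i (i + 1)⟩) ∨
  (∃ i j, M.arc i j ∧ M.arc (i + 1) (j - 1) ∧ i + 1 < j - 1 ∧ M.sameBB i (i + 1) ∧
      M.sameBB (j - 1) j ∧
      M' = ⟨M.n - 1, mshift M.m (i + 1) (j - 1), deleteTwo M.f (i + 1) (j - 1)⟩)

/-- A pure preshape: no 1-arc and no stack remain. -/
def Reduced (P : TwoD) : Prop :=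
  (∀ i, ¬ (P.arc i (i + 1) ∧ P.sameBB i (i + 1))) ∧
  (∀ i j, P.arc i j → P.arc (i + 1) (j - 1) → P.sameBB i (i + 1) →
      P.sameBB (j - 1) j → ¬ (i + 1 < j - 1))

/-- Relabeling of an old vertex of a preshape after planting rainbows. -/
def newlab (m o : ℕ) : ℕ := if o < m then o + 1 else o + 3

/-- Plant a rainbow over each backbone of a pure preshape. -/
def plant (P : TwoD) : TwoD :=
  ⟨P.n + 2, P.m + 2, fun k =>
    if k = 0 then P.m + 1
    else if k = P.m + 1 then 0
    else if k = P.m + 2 then 2 * P.n + 3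
    else if k = 2 * P.n + 3 then P.m + 2
    else if k ≤ P.m then newlab P.m (P.f (k - 1))
    else if k ≤ 2 * P.n + 2 then newlab P.m (P.f (k - 3))
    else k⟩

/-- `s` is the shape of the 2-backbone matching `M`: iteratively collapse stacks and
delete 1-arcs until none remains, then add a rainbow over each backbone. -/
def ShapeOf (M s : TwoD) : Prop :=
  ∃ P : TwoD, Relation.ReflTransGen Step M P ∧ Reduced P ∧ s = plant P

/-- `q_s(n)`: the number of 2-backbone matchings with `n` arcs whose shape is `s`. -/
def fiberCount (s : TwoD) (n : ℕ) : ℕ :=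
  Set.ncard {M : TwoD | M.WF ∧ M.n = n ∧ ShapeOf M s}

/-- `w_g(n)`: the number of connected 2-backbone matchings with `n` arcs and genus `g`. -/
def wCount (g n : ℕ) : ℕ :=
  Set.ncard {M : TwoD | M.WF ∧ M.Connected ∧ M.HasGenus g ∧ M.n = n}

/-- `W_g(z) = Σ_n w_g(n) zⁿ`, as a formal power series. -/
def Wseries (g : ℕ) : PowerSeries ℤ := PowerSeries.mk fun n => (wCount g n : ℤ)

/-- The Catalan generating function `C₀(z) = Σ_n Catalan(n) zⁿ`. -/
def catGF : PowerSeries ℤ := PowerSeries.mk fun n => (catalan n : ℤ)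

/-- `q̃_g(l)`: the number of connected 2-backbone shapes of genus `g` having `l` arcs
besides their two rainbows. -/
def qlCount (g l : ℕ) : ℕ := qCount g (l + 2)

end

open Set

section Orbits

variable {f g e : ℕ → ℕ} {A B : Set ℕ} {p : ℕ → Prop} {x : ℕ}

lemma mem_orbitOf_self (f : ℕ → ℕ) (x : ℕ) : x ∈ orbitOf f x := ⟨0, rfl⟩

lemma orbitOf_subset (hA : MapsTo f A A) (hx : x ∈ A) : orbitOf f x ⊆ A := by
  rintro _ ⟨j, rfl⟩
  exact hA.iterate j hx

lemma orbitOf_of_fixed (h : f x = x) : orbitOf f x = {x} :=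
  (orbitOf_subset (A := {x}) (by simpa [MapsTo] using h) rfl).antisymm
    (singleton_subset_iff.2 (mem_orbitOf_self f x))

lemma orbitOf_of_three_cycle {a b c : ℕ} (h₁ : f a = b) (h₂ : f b = c) (h₃ : f c = a) :
    orbitOf f a = {a, b, c} := by
  refine (orbitOf_subset ?_ (by simp)).antisymm ?_
  · rintro y (rfl | rfl | rfl) <;> simp [*]
  · rintro y (rfl | rfl | rfl)
    exacts [⟨0, rfl⟩, ⟨1, h₁⟩, ⟨2, by simp [h₁, h₂]⟩]

lemma orbitOf_semiconj (hA : MapsTo f A A) (hc : ∀ a ∈ A, g (e a) = e (f a)) (hx : x ∈ A) :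
    orbitOf g (e x) = e '' orbitOf f x := by
  have key : ∀ j, g^[j] (e x) = e (f^[j] x) := by
    intro j
    induction j with
    | zero => rfl
    | succ j ih =>
      rw [Function.iterate_succ_apply', Function.iterate_succ_apply', ih, hc _ (hA.iterate j hx)]
  ext y
  constructor
  · rintro ⟨j, rfl⟩
    exact ⟨_, ⟨j, rfl⟩, (key j).symm⟩
  · rintro ⟨_, ⟨j, rfl⟩, rfl⟩
    exact ⟨j, key j⟩

def orbitsWith (f : ℕ → ℕ) (A : Set ℕ) (p : ℕ → Prop) : Set (Set ℕ) :=
  {S ∈ orbitOf f '' A | p S.ncard}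

lemma numCyclesOn_eq_ncard_orbitsWith (f : ℕ → ℕ) (k : ℕ) :
    numCyclesOn f k = (orbitsWith f (Iio k) fun _ => True).ncard := by
  simp only [numCyclesOn, orbitsWith, sep_true]
  congr 1
  ext S
  simp [eq_comm]

lemma numMultiOn_eq_ncard_orbitsWith (f : ℕ → ℕ) (k : ℕ) :
    numMultiOn f k = (orbitsWith f (Iio k) (3 ≤ ·)).ncard := by
  simp only [numMultiOn, orbitsWith]
  congr 1
  ext S
  simp [eq_comm]

lemma orbitsWith_finite (hA : A.Finite) : (orbitsWith f A p).Finite :=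
  (hA.image _).subset (sep_subset _ _)

lemma one_le_numCyclesOn (f : ℕ → ℕ) {k : ℕ} (hk : 0 < k) : 1 ≤ numCyclesOn f k := by
  rw [numCyclesOn_eq_ncard_orbitsWith]
  exact (ncard_pos (orbitsWith_finite (finite_Iio k))).2
    ⟨orbitOf f 0, ⟨0, hk, rfl⟩, trivial⟩

lemma ncard_orbitsWith_union (hB : MapsTo f B B) (hAB : Disjoint A B) (hA : A.Finite)
    (hBf : B.Finite) :
    (orbitsWith f (A ∪ B) p).ncard = (orbitsWith f A p).ncard + (orbitsWith f B p).ncard := by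
  have hsplit : orbitsWith f (A ∪ B) p = orbitsWith f A p ∪ orbitsWith f B p := by
    simp only [orbitsWith, image_union, mem_union, sep_union]
  refine hsplit ▸ ncard_union_eq ?_ (orbitsWith_finite hA) (orbitsWith_finite hBf)
  rw [Set.disjoint_left]
  rintro _ ⟨⟨a, ha, rfl⟩, -⟩ ⟨⟨b, hb, hab⟩, -⟩
  -- the orbit through `a ∈ A` is also the orbit through `b`, hence lies in `B`
  exact hAB.notMem_of_mem_left ha (orbitOf_subset hB hb (hab ▸ mem_orbitOf_self f a))

lemma ncard_orbitsWith_image (he : Function.Injective e) (hA : MapsTo f A A)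
    (hc : ∀ a ∈ A, g (e a) = e (f a)) :
    (orbitsWith g (e '' A) p).ncard = (orbitsWith f A p).ncard := by
  have himage : orbitsWith g (e '' A) p = image e '' orbitsWith f A p := by
    ext S
    simp only [orbitsWith, mem_ofPred_eq, mem_image, exists_exists_and_eq_and]
    constructor
    · rintro ⟨⟨a, ha, rfl⟩, hp⟩
      rw [orbitOf_semiconj hA hc ha, ncard_image_of_injective _ he] at hp
      exact ⟨_, ⟨⟨a, ha, rfl⟩, hp⟩, (orbitOf_semiconj hA hc ha).symm⟩
    · rintro ⟨_, ⟨⟨a, ha, rfl⟩, hp⟩, rfl⟩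
      refine ⟨⟨a, ha, orbitOf_semiconj hA hc ha⟩, ?_⟩
      rwa [ncard_image_of_injective _ he]
  rw [himage, ncard_image_of_injective _ (image_injective.2 he)]

variable [DecidablePred p]

lemma ncard_orbitsWith_of_image_eq_singleton {S : Set ℕ} (h : orbitOf f '' A = {S}) :
    (orbitsWith f A p).ncard = if p S.ncard then 1 else 0 := by
  split_ifs with hp
  · have : orbitsWith f A p = {S} := by
      ext T
      simp only [orbitsWith, h, mem_singleton_iff, mem_ofPred_eq, and_iff_left_iff_imp]
      rintro rfl
      exact hp
    rw [this, ncard_singleton]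
  · have : orbitsWith f A p = ∅ := by
      ext T
      simp only [orbitsWith, h, mem_singleton_iff, mem_ofPred_eq, mem_empty_iff_false,
        iff_false, not_and]
      rintro rfl
      exact hp
    rw [this, ncard_empty]

lemma ncard_orbitsWith_of_fixed (h : f x = x) :
    (orbitsWith f {x} p).ncard = if p 1 then 1 else 0 := by
  rw [ncard_orbitsWith_of_image_eq_singleton (S := {x})
    (by rw [image_singleton, orbitOf_of_fixed h]), ncard_singleton]

lemma ncard_orbitsWith_of_three_cycle {a b c : ℕ} (h₁ : f a = b) (h₂ : f b = c)
    (h₃ : f c = a) (hab : a ≠ b) (hac : a ≠ c) (hbc : b ≠ c) :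
    (orbitsWith f {a, b, c} p).ncard = if p 3 then 1 else 0 := by
  have horbits : orbitOf f '' {a, b, c} = {{a, b, c}} := by
    rw [image_insert_eq, image_pair, orbitOf_of_three_cycle h₁ h₂ h₃,
      orbitOf_of_three_cycle h₂ h₃ h₁, orbitOf_of_three_cycle h₃ h₁ h₂]
    ext S
    simp only [mem_insert_iff, mem_singleton_iff]
    grind
  rw [ncard_orbitsWith_of_image_eq_singleton horbits,
    ncard_eq_three.2 ⟨a, b, c, hab, hac, hbc, rfl⟩]

end Orbits

section Permutations

variable {i k m : ℕ}

lemma gammaOne_of_succ_eq (h : i + 1 = k) : gammaOne k i = 0 := if_pos h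

lemma gammaOne_of_succ_lt (h : i + 1 < k) : gammaOne k i = i + 1 := by
  simp only [gammaOne]
  split_ifs <;> omega

lemma gammaTwo_of_succ_eq_left (h : i + 1 = m) : gammaTwo m k i = 0 := if_pos h

lemma gammaTwo_of_succ_eq_right (hm : i + 1 ≠ m) (h : i + 1 = k) : gammaTwo m k i = m := by
  simp only [gammaTwo, if_neg hm, if_pos h]

lemma gammaTwo_of_succ_lt (hm : i + 1 ≠ m) (h : i + 1 < k) : gammaTwo m k i = i + 1 := by
  simp only [gammaTwo]
  split_ifs <;> omega

end Permutations

namespace OneD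

variable {S : OneD}

lemma WF.mapsTo_bd (hW : S.WF) : MapsTo S.bd (Iio (2 * S.n)) (Iio (2 * S.n)) := by
  intro a ha
  refine hW.2.1 _ ?_
  simp only [mem_Iio, gammaOne] at ha ⊢
  split_ifs <;> omega

lemma WF.two_le_n (hW : S.WF) {g : ℕ} (hg : S.HasGenus g) (hg₁ : 1 ≤ g) : 2 ≤ S.n := by
  have := one_le_numCyclesOn S.bd (k := 2 * S.n) (by have := hW.1; omega)
  unfold HasGenus r at hg
  omega

end OneD

namespace TwoD

variable {D : TwoD}

def nonLastVertices (D : TwoD) : Set ℕ := Iio (2 * D.n) \ {D.m - 1, 2 * D.n - 1}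

lemma finite_nonLastVertices : D.nonLastVertices.Finite := (finite_Iio _).sdiff

lemma IsShape.f_cut_pred (hW : D.WF) (hS : D.IsShape) : D.f (D.m - 1) = 0 := by
  have ⟨_, _, _, _, hinv, _⟩ := hW
  have ⟨_, _, hf0, _⟩ := hS
  rw [← hf0, hinv]

lemma IsShape.f_last (hW : D.WF) (hS : D.IsShape) : D.f (2 * D.n - 1) = D.m := by
  have ⟨_, _, _, _, hinv, _⟩ := hW
  have ⟨_, _, _, hfm, _⟩ := hS
  rw [← hfm, hinv]

lemma IsShape.three_le_m (hW : D.WF) (hS : D.IsShape) (hC : D.Connected) : 3 ≤ D.m := by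
  have ⟨hm2, _, hf0, _⟩ := hS
  obtain ⟨i, j, ⟨-, rfl⟩, hi, hj⟩ := hC
  by_contra hm
  obtain rfl | rfl : i = 0 ∨ i = D.m - 1 := by omega
  · omega
  · have := hS.f_cut_pred hW
    omega

lemma IsShape.m_add_three_le (hW : D.WF) (hS : D.IsShape) (hC : D.Connected) :
    D.m + 3 ≤ 2 * D.n := by
  have ⟨_, _, hlt, _, hinv, _⟩ := hW
  have ⟨_, hmn, _, hfm, _⟩ := hS
  obtain ⟨i, j, ⟨hi, rfl⟩, him, hj⟩ := hC
  have hinv := hinv i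
  by_contra hm
  obtain h | h : D.f i = D.m ∨ D.f i = 2 * D.n - 1 := by
    have := hlt i hi
    omega
  · rw [h, hfm] at hinv
    omega
  · rw [h, hS.f_last hW] at hinv
    omega

lemma IsShape.bd_cut_pred (hS : D.IsShape) : D.bd (D.m - 1) = D.m - 1 := by
  have ⟨hm2, _, hf0, _⟩ := hS
  rw [bd, Function.comp_apply, gammaTwo_of_succ_eq_left (by omega), hf0]

lemma IsShape.bd_last (hS : D.IsShape) : D.bd (2 * D.n - 1) = 2 * D.n - 1 := by
  have ⟨_, hmn, _, hfm, _⟩ := hS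
  rw [bd, Function.comp_apply, gammaTwo_of_succ_eq_right (by omega) (by omega), hfm]

lemma bd_of_succ_lt {a : ℕ} (hm : a + 1 ≠ D.m) (h : a + 1 < 2 * D.n) :
    D.bd a = D.f (a + 1) := by
  rw [bd, Function.comp_apply, gammaTwo_of_succ_lt hm h]

lemma IsShape.mapsTo_bd_nonLastVertices (hW : D.WF) (hS : D.IsShape) :
    MapsTo D.bd D.nonLastVertices D.nonLastVertices := by
  intro a ha
  simp only [nonLastVertices, mem_sdiff, mem_Iio, mem_insert_iff, mem_singleton_iff,
    not_or] at ha ⊢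
  obtain ⟨ha, ham, han⟩ := ha
  have ⟨_, _, hlt, _, hinv, _⟩ := hW
  have hinv := hinv (a + 1)
  rw [bd_of_succ_lt (by omega) (by omega)]
  refine ⟨hlt _ (by omega), fun h => ?_, fun h => ?_⟩
  · rw [h, hS.f_cut_pred hW] at hinv
    omega
  · rw [h, hS.f_last hW] at hinv
    omega

lemma IsShape.ncard_orbitsWith_bd (hS : D.IsShape) (p : ℕ → Prop) [DecidablePred p] :
    (orbitsWith D.bd (Iio (2 * D.n)) p).ncard =
      (orbitsWith D.bd D.nonLastVertices p).ncard + 2 * (if p 1 then 1 else 0) := by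
  have ⟨_, hmn, _⟩ := hS
  have hfix : MapsTo D.bd ({D.m - 1} ∪ {2 * D.n - 1}) ({D.m - 1} ∪ {2 * D.n - 1}) := by
    rintro _ (rfl | rfl)
    exacts [.inl hS.bd_cut_pred, .inr hS.bd_last]
  have hsplit : Iio (2 * D.n) = D.nonLastVertices ∪ ({D.m - 1} ∪ {2 * D.n - 1}) := by
    rw [nonLastVertices, ← insert_eq, sdiff_union_of_subset]
    simp only [insert_subset_iff, mem_Iio, singleton_subset_iff]
    omega
  rw [hsplit, ncard_orbitsWith_union hfix
      (by rw [nonLastVertices, ← insert_eq]; exact disjoint_sdiff_left)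
      finite_nonLastVertices (by simp),
    ncard_orbitsWith_union (by simp [MapsTo, hS.bd_last]) (by simp; omega) (by simp) (by simp),
    ncard_orbitsWith_of_fixed hS.bd_cut_pred, ncard_orbitsWith_of_fixed hS.bd_last]
  omega

end TwoD

section Glue

variable {D : TwoD} {i j : ℕ}

lemma glue_n : (glue D).n = D.n + 1 := rfl

lemma glue_f_zero : (glue D).f 0 = 2 * D.n + 1 := rfl

lemma glue_f_succ (h : i < 2 * D.n) : (glue D).f (i + 1) = D.f i + 1 := by
  simp only [glue]
  rw [if_neg (by omega), if_neg (by omega), if_pos (by omega), Nat.add_sub_cancel]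

lemma glue_f_last : (glue D).f (2 * D.n + 1) = 0 := by
  simp [glue]

lemma glue_f_of_lt (h : 2 * D.n + 1 < i) : (glue D).f i = i := by
  simp only [glue]
  split_ifs <;> omega

lemma glue_f_one (hS : D.IsShape) : (glue D).f 1 = D.m := by
  have ⟨hm2, hmn, hf0, _⟩ := hS
  simpa [hf0, Nat.sub_add_cancel (one_le_two.trans hm2)] using
    glue_f_succ (D := D) (i := 0) (by omega)

lemma TwoD.WF.glue (hW : D.WF) : (glue D).WF := by
  obtain ⟨-, hmn, hlt, -, hinv, hne⟩ := hW
  have hcases : ∀ i, i = 0 ∨ (∃ j < 2 * D.n, i = j + 1) ∨ i = 2 * D.n + 1 ∨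
      2 * D.n + 1 < i := by
    rintro (_ | j)
    · exact .inl rfl
    · rcases lt_trichotomy j (2 * D.n) with hj | rfl | hj
      exacts [.inr (.inl ⟨j, hj, rfl⟩), .inr (.inr (.inl rfl)), .inr (.inr (.inr (by omega)))]
  simp only [OneD.WF, glue_n, glue_f_zero]
  refine ⟨by omega, fun i hi => ?_, fun i hi => glue_f_of_lt (by omega), fun i => ?_,
    fun i hi => ?_, by omega⟩
  all_goals rcases hcases i with rfl | ⟨j, hj, rfl⟩ | rfl | hi'
  all_goals simp only [glue_f_zero, glue_f_last, glue_f_succ, glue_f_of_lt, *]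
  all_goals first | omega | (have := hlt j hj; have := hne j hj; omega)

lemma not_glue_arc_succ (hW : D.WF) (hS : D.IsShape) (hm : 3 ≤ D.m)
    (hm' : D.m + 3 ≤ 2 * D.n) : ¬ (glue D).arc i (i + 1) := by
  have ⟨_, _, _, _, h1arc, _⟩ := hS
  have hcut := hS.f_cut_pred hW
  rintro ⟨hi, hfi⟩
  rw [glue_n] at hi
  rcases i with _ | i
  · rw [glue_f_zero] at hfi
    omega
  obtain hi' | rfl : i < 2 * D.n ∨ i = 2 * D.n := by omega
  · rw [glue_f_succ hi'] at hfi
    have hcross : i + 1 ≠ D.m := by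
      intro h
      rw [show D.m - 1 = i by omega] at hcut
      omega
    have := h1arc i ⟨hi', by omega⟩ (by unfold TwoD.sameBB; omega)
    omega
  · rw [glue_f_last] at hfi
    omega

lemma not_glue_stack (hW : D.WF) (hS : D.IsShape) (hij : (glue D).arc i j)
    (hij' : (glue D).arc (i + 1) (j - 1)) : ¬ i + 1 < j - 1 := by
  have ⟨_, _, _, _, hinv, _⟩ := hW
  have ⟨_, hmn, hf0, hfm, _, hstack⟩ := hS
  have hcut := hS.f_cut_pred hW
  obtain ⟨hi, hfi⟩ := hij
  obtain ⟨hi1, hfi1⟩ := hij'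
  intro hlt
  rcases i with _ | i
  · rw [glue_f_zero] at hfi
    rw [zero_add, glue_f_succ (by omega), hf0] at hfi1
    omega
  rw [glue_n] at hi hi1
  have hi' : i + 1 < 2 * D.n := by
    by_contra h
    rw [show i + 1 + 1 = 2 * D.n + 1 by omega, glue_f_last] at hfi1
    omega
  rw [glue_f_succ (by omega)] at hfi
  rw [glue_f_succ hi'] at hfi1
  have hcross : i + 1 ≠ D.m := by
    intro h
    rw [show D.m - 1 = i by omega] at hcut
    omega
  have hcross' : j - 1 ≠ D.m := by
    intro h
    have := hinv i
    rw [show D.f i = D.m by omega, hfm] at this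
    omega
  exact hstack i (j - 1) ⟨by omega, by omega⟩ ⟨hi', by omega⟩
    (by unfold TwoD.sameBB; omega) (by unfold TwoD.sameBB; omega) (by omega)

lemma TwoD.IsShape.glue (hW : D.WF) (hS : D.IsShape) (hm : 3 ≤ D.m)
    (hm' : D.m + 3 ≤ 2 * D.n) : (glue D).IsShape :=
  ⟨fun _ h => (not_glue_arc_succ hW hS hm hm' h).elim, fun _ _ => not_glue_stack hW hS⟩

lemma isA_glue (hS : D.IsShape) : (glue D).IsA := by
  have ⟨_, hmn, _, hfm, _⟩ := hS
  refine ⟨by rw [glue_n]; omega, ?_⟩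
  rw [glue_f_one hS, glue_f_succ (by omega), hfm, glue_n]
  omega

lemma glue_bd (a : ℕ) : (glue D).bd a = (glue D).f (gammaOne (2 * D.n + 2) a) := rfl

lemma glue_bd_zero (hS : D.IsShape) : (glue D).bd 0 = D.m := by
  rw [glue_bd, gammaOne_of_succ_lt (by omega), glue_f_one hS]

lemma glue_bd_m (hS : D.IsShape) : (glue D).bd D.m = 2 * D.n := by
  have ⟨_, hmn, _, hfm, _⟩ := hS
  rw [glue_bd, gammaOne_of_succ_lt (by omega), glue_f_succ (by omega), hfm]
  omega

lemma glue_bd_two_mul_n : (glue D).bd (2 * D.n) = 0 := by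
  rw [glue_bd, gammaOne_of_succ_lt (by omega), glue_f_last]

lemma glue_bd_last : (glue D).bd (2 * D.n + 1) = 2 * D.n + 1 := by
  rw [glue_bd, gammaOne_of_succ_eq rfl, glue_f_zero]

lemma glue_bd_succ {a : ℕ} (hm : a + 1 ≠ D.m) (h : a + 1 < 2 * D.n) :
    (glue D).bd (a + 1) = D.bd a + 1 := by
  rw [glue_bd, gammaOne_of_succ_lt (by omega), glue_f_succ h, TwoD.bd_of_succ_lt hm h]

lemma ncard_orbitsWith_glue_bd (hW : D.WF) (hS : D.IsShape) (p : ℕ → Prop) [DecidablePred p] :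
    (orbitsWith (glue D).bd (Iio (2 * D.n + 2)) p).ncard =
      (orbitsWith D.bd D.nonLastVertices p).ncard +
        (if p 3 then 1 else 0) + (if p 1 then 1 else 0) := by
  have ⟨hm2, hmn, _⟩ := hS
  have hsemiconj : ∀ a ∈ D.nonLastVertices, (glue D).bd (a + 1) = D.bd a + 1 := by
    intro a ha
    simp only [TwoD.nonLastVertices, mem_sdiff, mem_Iio, mem_insert_iff,
      mem_singleton_iff] at ha
    exact glue_bd_succ (by omega) (by omega)
  have hfix : MapsTo (glue D).bd ({0, D.m, 2 * D.n} ∪ {2 * D.n + 1})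
      ({0, D.m, 2 * D.n} ∪ {2 * D.n + 1}) := by
    rintro _ ((rfl | rfl | rfl) | rfl)
    · simp [glue_bd_zero hS]
    · simp [glue_bd_m hS]
    · simp [glue_bd_two_mul_n]
    · simp [glue_bd_last]
  have hsplit : Iio (2 * D.n + 2) =
      (· + 1) '' D.nonLastVertices ∪ ({0, D.m, 2 * D.n} ∪ {2 * D.n + 1}) := by
    ext x
    simp only [TwoD.nonLastVertices, mem_Iio, mem_union, mem_image, mem_sdiff, mem_insert_iff,
      mem_singleton_iff]
    constructor
    · intro hx
      by_cases hx0 : x = 0 ∨ x = D.m ∨ x = 2 * D.n ∨ x = 2 * D.n + 1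
      · exact .inr (by tauto)
      · exact .inl ⟨x - 1, by omega, by omega⟩
    · rintro (⟨a, ⟨ha, ha'⟩, rfl⟩ | h) <;> omega
  have hdisj : Disjoint ((· + 1) '' D.nonLastVertices) ({0, D.m, 2 * D.n} ∪ {2 * D.n + 1}) := by
    rw [Set.disjoint_left]
    rintro _ ⟨a, ha, rfl⟩ h
    simp only [TwoD.nonLastVertices, mem_sdiff, mem_Iio, mem_insert_iff, mem_singleton_iff,
      mem_union] at ha h
    omega
  rw [hsplit, ncard_orbitsWith_union hfix hdisj (TwoD.finite_nonLastVertices.image _) (by simp),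
    ncard_orbitsWith_image (add_left_injective 1) (hS.mapsTo_bd_nonLastVertices hW) hsemiconj,
    ncard_orbitsWith_union (by simp [MapsTo, glue_bd_last]) (by simp; omega) (by simp) (by simp),
    ncard_orbitsWith_of_three_cycle (glue_bd_zero hS) (glue_bd_m hS) glue_bd_two_mul_n
      (by omega) (by omega) (by omega),
    ncard_orbitsWith_of_fixed glue_bd_last, add_assoc]

lemma r_glue (hW : D.WF) (hS : D.IsShape) : (glue D).r = D.r := by
  rw [OneD.r, TwoD.r, numCyclesOn_eq_ncard_orbitsWith, numCyclesOn_eq_ncard_orbitsWith, glue_n,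
    mul_add_one, ncard_orbitsWith_glue_bd hW hS, hS.ncard_orbitsWith_bd]
  simp only [if_true]

lemma nMulti_glue (hW : D.WF) (hS : D.IsShape) : (glue D).nMulti = D.nMulti + 1 := by
  rw [OneD.nMulti, TwoD.nMulti, numMultiOn_eq_ncard_orbitsWith, numMultiOn_eq_ncard_orbitsWith,
    glue_n, mul_add_one, ncard_orbitsWith_glue_bd hW hS, hS.ncard_orbitsWith_bd]
  norm_num

lemma glue_mem_ASetN {g n : ℕ} (hW : D.WF) (hS : D.IsShape) (hm : 3 ≤ D.m)
    (hm' : D.m + 3 ≤ 2 * D.n) (hg : D.HasGenus g) (hn : D.n = n + 2) :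
    glue D ∈ ASetN (g + 1) (n + 3) := by
  refine ⟨⟨⟨hW.glue, hS.glue hW hm hm', ?_⟩, by rw [glue_n, hn]⟩, isA_glue hS⟩
  rw [OneD.HasGenus, r_glue hW hS, glue_n]
  rw [TwoD.HasGenus] at hg
  omega

end Glue

section Combine

variable {S T : OneD} {i : ℕ}

lemma combine_n : (combine S T).n = S.n + T.n := rfl

lemma combine_m : (combine S T).m = 2 * S.n := rfl

lemma combine_f_of_lt (h : i < 2 * S.n) : (combine S T).f i = S.f i := if_pos h

lemma combine_f_add (h : i < 2 * T.n) : (combine S T).f (i + 2 * S.n) = T.f i + 2 * S.n := by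
  simp only [combine]
  rw [if_neg (by omega), if_pos (by omega), Nat.add_sub_cancel]

lemma combine_f_of_le (h : 2 * (S.n + T.n) ≤ i) : (combine S T).f i = i := by
  simp only [combine]
  rw [if_neg (by omega), if_neg (by omega)]

lemma OneD.WF.combine (hS : S.WF) (hT : T.WF) : (combine S T).WF := by
  obtain ⟨hS1, hSlt, -, hSinv, hSne, -⟩ := hS
  obtain ⟨hT1, hTlt, -, hTinv, hTne, -⟩ := hT
  have hcases : ∀ i, i < 2 * S.n ∨ (∃ j < 2 * T.n, i = j + 2 * S.n) ∨
      2 * (S.n + T.n) ≤ i := by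
    intro i
    by_cases h : i < 2 * S.n
    · exact .inl h
    by_cases h' : i < 2 * (S.n + T.n)
    · exact .inr (.inl ⟨i - 2 * S.n, by omega, by omega⟩)
    · exact .inr (.inr (by omega))
  simp only [TwoD.WF, combine_n, combine_m]
  refine ⟨by omega, by omega, fun i hi => ?_, fun i hi => combine_f_of_le hi, fun i => ?_,
    fun i hi => ?_⟩
  all_goals rcases hcases i with hi' | ⟨j, hj, rfl⟩ | hi'
  all_goals simp only [combine_f_of_lt, combine_f_add, combine_f_of_le, *]
  all_goals first
    | omega
    | (have := hSlt i hi'; have := hSne i hi'; omega)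
    | (have := hTlt j hj; have := hTne j hj; omega)

lemma OneD.IsShape.combine (hSW : S.WF) (hTW : T.WF) (hS : S.IsShape) (hT : T.IsShape) :
    (combine S T).IsShape := by
  obtain ⟨hS1, hSlt, -, -, -, hSf0⟩ := hSW
  obtain ⟨hT1, hTlt, -, -, -, hTf0⟩ := hTW
  refine ⟨by rw [combine_m]; omega, by rw [combine_m, combine_n]; omega, ?_, ?_, ?_, ?_⟩
  · rw [combine_f_of_lt (by omega), hSf0, combine_m]
  · have := combine_f_add (S := S) (T := T) (i := 0) (by omega)
    rw [zero_add, hTf0] at this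
    rw [combine_m, combine_n, this]
    omega
  · rintro i ⟨hi, hfi⟩ (⟨-, hi1⟩ | ⟨hi1, -⟩) <;> simp only [combine_m, combine_n] at *
    · rw [combine_f_of_lt (by omega)] at hfi
      have := hS.1 i ⟨by omega, hfi⟩
      omega
    · obtain ⟨k, rfl⟩ := Nat.exists_eq_add_of_le' hi1
      rw [combine_f_add (by omega)] at hfi
      have := hT.1 k ⟨by omega, by omega⟩
      omega
  · rintro i j ⟨hi, hfi⟩ ⟨hi1, hfi1⟩ hii (⟨-, hj⟩ | ⟨hj1, -⟩)
      <;> rcases hii with ⟨-, hi1'⟩ | ⟨hi', -⟩ <;> simp only [combine_m, combine_n] at *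
    · rw [combine_f_of_lt (by omega)] at hfi
      rw [combine_f_of_lt (by omega)] at hfi1
      exact hS.2 i j ⟨by omega, hfi⟩ ⟨by omega, hfi1⟩
    · obtain ⟨k, rfl⟩ := Nat.exists_eq_add_of_le' hi'
      rw [combine_f_add (by omega)] at hfi
      omega
    · rw [combine_f_of_lt (by omega)] at hfi
      have := hSlt i (by omega)
      omega
    · obtain ⟨k, rfl⟩ := Nat.exists_eq_add_of_le' hi'
      rw [combine_f_add (by omega)] at hfi
      rw [show k + 2 * S.n + 1 = k + 1 + 2 * S.n by omega, combine_f_add (by omega)] at hfi1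
      intro hlt
      exact hT.2 k (T.f k) ⟨by omega, rfl⟩ ⟨by omega, by omega⟩ (by omega)

lemma combine_bd_of_lt {a : ℕ} (h : a < 2 * S.n) : (combine S T).bd a = S.bd a := by
  simp only [TwoD.bd, OneD.bd, Function.comp_apply, combine_m, combine_n]
  by_cases ha : a + 1 = 2 * S.n
  · rw [gammaTwo_of_succ_eq_left ha, gammaOne_of_succ_eq ha, combine_f_of_lt (by omega)]
  · rw [gammaTwo_of_succ_lt ha (by omega), gammaOne_of_succ_lt (by omega),
      combine_f_of_lt (by omega)]

lemma combine_bd_add {a : ℕ} (h : a < 2 * T.n) :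
    (combine S T).bd (a + 2 * S.n) = T.bd a + 2 * S.n := by
  simp only [TwoD.bd, OneD.bd, Function.comp_apply, combine_m, combine_n]
  by_cases ha : a + 1 = 2 * T.n
  · rw [gammaTwo_of_succ_eq_right (by omega) (by omega), gammaOne_of_succ_eq ha,
      ← zero_add (2 * S.n), combine_f_add (by omega), zero_add]
  · rw [gammaTwo_of_succ_lt (by omega) (by omega), gammaOne_of_succ_lt (by omega),
      show a + 2 * S.n + 1 = a + 1 + 2 * S.n by omega, combine_f_add (by omega)]

lemma r_combine (hSW : S.WF) (hTW : T.WF) : (combine S T).r = S.r + T.r := by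
  have hmaps : MapsTo (combine S T).bd (Iio (2 * S.n)) (Iio (2 * S.n)) := fun a ha =>
    (combine_bd_of_lt ha).symm ▸ hSW.mapsTo_bd ha
  have hsplit : Iio (2 * (S.n + T.n)) = (· + 2 * S.n) '' Iio (2 * T.n) ∪ Iio (2 * S.n) := by
    ext x
    simp only [mem_Iio, mem_union, mem_image]
    constructor
    · intro hx
      by_cases h : x < 2 * S.n
      · exact .inr h
      · exact .inl ⟨x - 2 * S.n, by omega, by omega⟩
    · rintro (⟨a, ha, rfl⟩ | h) <;> omega
  have hdisj : Disjoint ((· + 2 * S.n) '' Iio (2 * T.n)) (Iio (2 * S.n)) := by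
    rw [Set.disjoint_left]
    rintro _ ⟨a, -, rfl⟩ h
    simp only [mem_Iio] at h
    omega
  have hleft : (orbitsWith (combine S T).bd (Iio (2 * S.n)) fun _ => True).ncard =
      (orbitsWith S.bd (Iio (2 * S.n)) fun _ => True).ncard := by
    simpa using ncard_orbitsWith_image (e := id) (A := Iio (2 * S.n)) (p := fun _ => True)
      Function.injective_id hSW.mapsTo_bd (fun a ha => combine_bd_of_lt ha)
  rw [TwoD.r, OneD.r, OneD.r, numCyclesOn_eq_ncard_orbitsWith, numCyclesOn_eq_ncard_orbitsWith,
    numCyclesOn_eq_ncard_orbitsWith, combine_n, hsplit,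
    ncard_orbitsWith_union hmaps hdisj ((finite_Iio _).image _) (finite_Iio _),
    ncard_orbitsWith_image (add_left_injective _) hTW.mapsTo_bd (fun a ha => combine_bd_add ha),
    hleft, add_comm]

lemma hasGenus_combine (hSW : S.WF) (hTW : T.WF) {g g₁ g₂ : ℕ} (hg₁ : S.HasGenus g₁)
    (hg₂ : T.HasGenus g₂) (hg : g₁ + g₂ = g + 1) : (combine S T).HasGenus g := by
  rw [OneD.HasGenus] at hg₁ hg₂
  rw [TwoD.HasGenus, r_combine hSW hTW, combine_n]
  omega

end Combine

/-- If `x ∈ 𝒬'_g(n+2)` has exactly `ℓ` multiloops (boundary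
components of length at least 3), then `η(x) ∈ 𝒜_{g+1}(n+3)` has exactly `ℓ+1`
multiloops. -/
theorem eta_multiloops (g n ℓ : ℕ) (x : TwoD ⊕ OneD × OneD)
    (hx : x ∈ QprimeSetN g (n + 2)) (hℓ : (underlyingTwoD x).nMulti = ℓ) :
    etaMap x ∈ ASetN (g + 1) (n + 3) ∧ (etaMap x).nMulti = ℓ + 1 := by
  subst hℓ
  rcases x with D | ⟨S, T⟩
  · obtain ⟨hW, hS, hC, hg, hn⟩ := hx
    exact ⟨glue_mem_ASetN hW hS (hS.three_le_m hW hC) (hS.m_add_three_le hW hC) hg hn,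
      nMulti_glue hW hS⟩
  · obtain ⟨hSW, hSS, hTW, hTS, ⟨g₁, g₂, h₁, h₂, hg, hg₁, hg₂⟩, hn⟩ := hx
    have hW := hSW.combine hTW
    have hS := hSS.combine hSW hTW hTS
    have := hSW.two_le_n hg₁ h₁
    have := hTW.two_le_n hg₂ h₂
    exact ⟨glue_mem_ASetN hW hS (by rw [combine_m]; omega) (by rw [combine_m, combine_n]; omega)
      (hasGenus_combine hSW hTW hg₁ hg₂ hg) (by rw [combine_n, hn]), nMulti_glue hW hS⟩

end RNA
end

section
/- For every fixed g ≥ 0, the set of all connected 2-backbone shapes of genus g (over all n) is finite. -/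
namespace RNA

/-! The boundary permutation `α ∘ γ` of a shape has at most four fixed points, since a fixed
point `x` means that `{x, γ x}` is an arc, i.e. a rainbow or a 1-arc; and it has no 2-cycles,
since a 2-cycle `x ↦ y ↦ x` produces the arcs `{x, y + 1}` and `{x + 1, y}`, a stack. Hence all
but four boundary components have length at least `3`, so `3 r ≤ 2 n + 8`. Together with
`2 g + r = n` this gives `n ≤ 6 g + 8`, and there are only finitely many diagrams with a bounded
number of arcs. -/

open Function Set

section Orbits

theorem mem_periodicPts_of_injOn {α : Type*} {f : α → α} {s : Set α} (hs : s.Finite)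
    (hinj : InjOn f s) (hmaps : MapsTo f s s) {x : α} (hx : x ∈ s) : x ∈ periodicPts f := by
  have : Finite s := hs.to_subtype
  obtain ⟨p, hp, hpx⟩ :=
    mem_periodicPts.1 ((hmaps.restrict_inj.2 hinj).mem_periodicPts ⟨x, hx⟩)
  refine mk_mem_periodicPts hp ?_
  simpa [IsPeriodicPt, IsFixedPt, hmaps.coe_iterate_restrict] using congrArg Subtype.val hpx.eq

variable {b : ℕ → ℕ} {k : ℕ}

theorem orbitOf_eq_of_mem {x y : ℕ} (hx : x ∈ periodicPts b) (hy : y ∈ orbitOf b x) :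
    orbitOf b y = orbitOf b x := by
  obtain ⟨j, rfl⟩ := hy
  obtain ⟨p, hp, hpx⟩ := mem_periodicPts.1 hx
  ext z
  constructor
  · rintro ⟨i, rfl⟩
    exact ⟨i + j, iterate_add_apply b i j x⟩
  · rintro ⟨i, rfl⟩
    refine ⟨i + p * j - j, ?_⟩
    rw [← iterate_add_apply, Nat.sub_add_cancel (by nlinarith), iterate_add_apply,
      (hpx.mul_const j).eq]

open Classical in
theorem numCyclesOn_eq_card_image :
    numCyclesOn b k = ((Finset.range k).image (orbitOf b)).card := by
  rw [numCyclesOn, ← Set.ncard_coe_finset]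
  congr 1
  ext S
  simp [eq_comm]

theorem three_le_card_orbit_fiber (hinj : InjOn b (Iio k)) (hmaps : MapsTo b (Iio k) (Iio k))
    (hno2 : ∀ x < k, b (b x) = x → b x = x) {x : ℕ} (hx : x < k) (hbx : b x ≠ x) :
    3 ≤ ((Finset.range k).filter (fun y => orbitOf b y = orbitOf b x)).card := by
  classical
  have hmem : ∀ j, b^[j] x ∈ (Finset.range k).filter (fun y => orbitOf b y = orbitOf b x) :=
    fun j => Finset.mem_filter.2 ⟨Finset.mem_range.2 (hmaps.iterate j hx),
      orbitOf_eq_of_mem (mem_periodicPts_of_injOn (finite_Iio k) hinj hmaps hx) ⟨j, rfl⟩⟩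
  have hb2 : b (b x) ≠ b x := fun h => hbx (hinj (hmaps hx) hx h)
  have hb2x : x ≠ b (b x) := fun h => hbx (hno2 x hx h.symm)
  calc 3 = ({x, b x, b (b x)} : Finset ℕ).card :=
        (Finset.card_eq_three.2 ⟨x, b x, b (b x), Ne.symm hbx, hb2x, Ne.symm hb2, rfl⟩).symm
    _ ≤ _ := Finset.card_le_card <| Finset.insert_subset (hmem 0) <|
        Finset.insert_subset (hmem 1) <| Finset.singleton_subset_iff.2 (hmem 2)

theorem three_mul_numCyclesOn_le (hinj : InjOn b (Iio k)) (hmaps : MapsTo b (Iio k) (Iio k))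
    (F : Finset ℕ) (hfix : ∀ x < k, b x = x → x ∈ F)
    (hno2 : ∀ x < k, b (b x) = x → b x = x) :
    3 * numCyclesOn b k ≤ k + 2 * F.card := by
  classical
  set O := (Finset.range k).image (orbitOf b)
  have hk : k = ∑ S ∈ O, ((Finset.range k).filter (fun y => orbitOf b y = S)).card := by
    simpa using Finset.card_eq_sum_card_image (orbitOf b) (Finset.range k)
  have hsmall : (O.filter (· ∈ F.image (orbitOf b))).card ≤ F.card :=
    (Finset.card_le_card fun S hS => (Finset.mem_filter.1 hS).2).trans Finset.card_image_le
  have hfiber : ∀ S ∈ O, 3 ≤ ((Finset.range k).filter (fun y => orbitOf b y = S)).card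
      + 2 * if S ∈ F.image (orbitOf b) then 1 else 0 := by
    intro S hS
    obtain ⟨x, hx, rfl⟩ := Finset.mem_image.1 hS
    rw [Finset.mem_range] at hx
    by_cases hbx : b x = x
    · have hxF : orbitOf b x ∈ F.image (orbitOf b) := Finset.mem_image_of_mem _ (hfix x hx hbx)
      have hpos : 0 < ((Finset.range k).filter (fun y => orbitOf b y = orbitOf b x)).card :=
        Finset.card_pos.2 ⟨x, Finset.mem_filter.2 ⟨Finset.mem_range.2 hx, rfl⟩⟩
      rw [if_pos hxF]
      omega
    · exact (three_le_card_orbit_fiber hinj hmaps hno2 hx hbx).trans (Nat.le_add_right _ _)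
  rw [numCyclesOn_eq_card_image]
  calc 3 * O.card = ∑ _S ∈ O, 3 := by rw [Finset.sum_const, smul_eq_mul, mul_comm]
    _ ≤ _ := Finset.sum_le_sum hfiber
    _ = k + 2 * (O.filter (· ∈ F.image (orbitOf b))).card := by
      rw [Finset.sum_add_distrib, ← Finset.mul_sum, Finset.sum_boole, ← hk]
      simp
    _ ≤ k + 2 * F.card := by omega

end Orbits

theorem gammaTwo_injective {m k : ℕ} (hm : 1 ≤ m) (hmk : m < k) : Injective (gammaTwo m k) := by
  intro a c h
  unfold gammaTwo at h
  split_ifs at h <;> omega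

namespace TwoD

variable {D : TwoD}

theorem WF.bd_injective (hD : D.WF) : Injective D.bd :=
  (LeftInverse.injective hD.2.2.2.2.1).comp (gammaTwo_injective hD.1 hD.2.1)

theorem WF.bd_mapsTo (hD : D.WF) : MapsTo D.bd (Iio (2 * D.n)) (Iio (2 * D.n)) := by
  obtain ⟨hm1, hmk, hlt, -⟩ := hD
  intro x hx
  apply hlt
  unfold gammaTwo
  simp only [mem_Iio] at hx
  split_ifs <;> omega

theorem IsShape.mem_of_bd_eq_self (hD : D.WF) (hS : D.IsShape) {x : ℕ} (hx : x < 2 * D.n)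
    (hfix : D.bd x = x) : x ∈ ({0, D.m - 1, D.m, 2 * D.n - 1} : Finset ℕ) := by
  obtain ⟨hm1, hmk, -, -, hinv, -⟩ := hD
  obtain ⟨-, -, hf0, hfm, h1arc, -⟩ := hS
  simp only [Finset.mem_insert, Finset.mem_singleton]
  simp only [bd, comp_apply, gammaTwo] at hfix
  split_ifs at hfix
  · omega
  · omega
  · have harc : D.arc x (x + 1) := ⟨hx, (congrArg D.f hfix).symm.trans (hinv _)⟩
    rcases h1arc x harc (by unfold sameBB; omega) with h | h <;> omega

theorem IsShape.not_stack (hD : D.WF) (hS : D.IsShape) {i j : ℕ} (hij : i < j)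
    (hj : j + 1 < 2 * D.n) (him : i + 1 ≠ D.m) (hjm : j + 1 ≠ D.m)
    (h1 : D.f (i + 1) = j) (h2 : D.f (j + 1) = i) : False := by
  obtain ⟨-, -, -, -, hinv, hnfix⟩ := hD
  have hstack := hS.2.2.2.2.2 i (j + 1) ⟨by omega, by rw [← h2, hinv]⟩
    ⟨by omega, by simpa using h1⟩ (by unfold sameBB; omega) (by unfold sameBB; omega)
  exact hnfix (i + 1) (by omega) (by rw [h1]; omega)

theorem IsShape.bd_no_two_cycle (hD : D.WF) (hS : D.IsShape) {x : ℕ} (hx : x < 2 * D.n)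
    (h2 : D.bd (D.bd x) = x) : D.bd x = x := by
  by_contra hne
  generalize hy : D.bd x = y at h2 hne
  have hy2n : y < 2 * D.n := hy ▸ hD.bd_mapsTo hx
  have hf0 : D.f 0 = D.m - 1 := hS.2.2.1
  have hfm : D.f D.m = 2 * D.n - 1 := hS.2.2.2.1
  simp only [bd, comp_apply, gammaTwo] at hy h2
  split_ifs at hy with hxm hxn
  · omega
  · omega
  split_ifs at h2 with hym hyn
  · omega
  · omega
  rcases Nat.lt_or_gt_of_ne hne with hyx | hxy
  · exact hS.not_stack hD hyx (by omega) hym hxm h2 hy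
  · exact hS.not_stack hD hxy (by omega) hxm hym hy h2

theorem IsShape.three_mul_r_le (hD : D.WF) (hS : D.IsShape) : 3 * D.r ≤ 2 * D.n + 8 :=
  (three_mul_numCyclesOn_le hD.bd_injective.injOn hD.bd_mapsTo _
    (fun _ hx h => hS.mem_of_bd_eq_self hD hx h) (fun _ hx h => hS.bd_no_two_cycle hD hx h)).trans
    (by have := Finset.card_le_four (a := 0) (b := D.m - 1) (c := D.m) (d := 2 * D.n - 1); omega)

theorem IsShape.n_le_of_hasGenus (hD : D.WF) (hS : D.IsShape) {g : ℕ} (hg : D.HasGenus g) :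
    D.n ≤ 6 * g + 8 := by
  have := hS.three_mul_r_le hD
  unfold HasGenus at hg
  omega

theorem eq_of_WF {D D' : TwoD} (hD : D.WF) (hD' : D'.WF) (hn : D.n = D'.n) (hm : D.m = D'.m)
    (hf : ∀ i < 2 * D.n, D.f i = D'.f i) : D = D' := by
  have hff : D.f = D'.f := funext fun i =>
    if hi : i < 2 * D.n then hf i hi
    else (hD.2.2.2.1 i (by omega)).trans (hD'.2.2.2.1 i (by omega)).symm
  cases D
  cases D'
  simp_all

theorem finite_setOf_WF_n_le (N : ℕ) : {D : TwoD | D.WF ∧ D.n ≤ N}.Finite := by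
  refine Set.Finite.of_injOn (f := fun D => (D.n, D.m, fun i : Fin (2 * N) => D.f i))
    (t := Iic N ×ˢ Iio (2 * N) ×ˢ pi univ fun _ => Iio (2 * N)) ?_ ?_
    ((finite_Iic N).prod ((finite_Iio _).prod (Set.Finite.pi fun _ => finite_Iio _)))
  · rintro D ⟨hD, hN⟩
    refine ⟨hN, by have := hD.2.1; simp only [mem_Iio]; omega, fun i _ => ?_⟩
    by_cases hi : (i : ℕ) < 2 * D.n
    · have := hD.2.2.1 i hi; simp only [mem_Iio]; omega
    · simp [hD.2.2.2.1 i (by omega)]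
  · rintro D ⟨hD, hN⟩ D' ⟨hD', -⟩ heq
    simp only [Prod.mk.injEq, funext_iff] at heq
    exact eq_of_WF hD hD' heq.1 heq.2.1 fun i hi => heq.2.2 ⟨i, by omega⟩

end TwoD

/-- For every fixed `g ≥ 0`, the set of all connected 2-backbone
shapes of genus `g` (over all `n`) is finite. -/
theorem twoShapeSet_finite (g : ℕ) :
    {D : TwoD | D.WF ∧ D.IsShape ∧ D.Connected ∧ D.HasGenus g}.Finite :=
  (TwoD.finite_setOf_WF_n_le (6 * g + 8)).subset fun _ ⟨hD, hS, _, hg⟩ =>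
    ⟨hD, hS.n_le_of_hasGenus hD hg⟩

end RNA
end
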